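/- arXiv:1809.10836 — 3 statements merged into one kernel-verified Lean document; each statement's English description precedes it below -/
import Mathlib

section
/- In B_4, let β, β', β'' be strongly quasipositive braids (possibly trivial). Then the braid σ_{1,2}^{−1} β σ_{1,3} β' σ_{2,3} β'' is quasipositive, and the braid σ_{1,2}^{−1} β σ_{1,4} β' σ_{2,4} β'' is quasipositive. -/
/-- Relations for the braid group `Bₙ`: the generator `k : Fin (n-1)` represents `σ_{k+1}`,
and we impose `σ_i σ_j = σ_j σ_i` for `|i - j| > 1` and `σ_i σ_{i+1} σ_i = σ_{i+1} σ_i σ_{i+1}`. -/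
def braidRels (n : ℕ) : Set (FreeGroup (Fin (n - 1))) :=
  {r | ∃ i j : Fin (n - 1), (i : ℕ) + 1 < (j : ℕ) ∧
      r = FreeGroup.of i * FreeGroup.of j * (FreeGroup.of i)⁻¹ * (FreeGroup.of j)⁻¹} ∪
  {r | ∃ i j : Fin (n - 1), (j : ℕ) = (i : ℕ) + 1 ∧
      r = FreeGroup.of i * FreeGroup.of j * FreeGroup.of i *
          (FreeGroup.of j * FreeGroup.of i * FreeGroup.of j)⁻¹}

/-- The braid group on `n` strands, presented with generators `σ_1, …, σ_{n-1}`. -/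
abbrev BraidGroup (n : ℕ) : Type := PresentedGroup (braidRels n)

/-- The standard generator `σ_i` of `Bₙ`, for `1 ≤ i ≤ n - 1` (junk value `1` otherwise). -/
def sigma (n i : ℕ) : BraidGroup n :=
  if h : 1 ≤ i ∧ i ≤ n - 1 then PresentedGroup.of ⟨i - 1, by omega⟩ else 1

/-- The word `σ_{j-1} σ_{j-2} ⋯ σ_{i+1}`. -/
def bandConj (n i j : ℕ) : BraidGroup n :=
  ((List.range (j - 1 - i)).map fun t => sigma n (j - 1 - t)).prod

/-- The band generator `σ_{i,j} = (σ_{j-1} σ_{j-2} ⋯ σ_{i+1}) σ_i (σ_{j-1} σ_{j-2} ⋯ σ_{i+1})⁻¹`.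
In particular `σ_{i,i+1} = σ_i`. -/
def band (n i j : ℕ) : BraidGroup n :=
  bandConj n i j * sigma n i * (bandConj n i j)⁻¹

/-- The set of band generators `σ_{i,j}`, `1 ≤ i < j ≤ n`, of `Bₙ`. -/
def bandGens (n : ℕ) : Set (BraidGroup n) :=
  {x | ∃ i j : ℕ, 1 ≤ i ∧ i < j ∧ j ≤ n ∧ x = band n i j}

/-- A braid is strongly quasipositive if it is a product of band generators, i.e. lies in the
submonoid generated by the `σ_{i,j}`, `1 ≤ i < j ≤ n`. -/
def StronglyQuasipositive (n : ℕ) (x : BraidGroup n) : Prop :=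
  x ∈ Submonoid.closure (bandGens n)

/-- A braid is quasipositive if it lies in the submonoid generated by all conjugates
`α σ_k α⁻¹` of the standard generators. -/
def Quasipositive (n : ℕ) (x : BraidGroup n) : Prop :=
  x ∈ Submonoid.closure
    {x : BraidGroup n | ∃ (α : BraidGroup n) (k : ℕ), 1 ≤ k ∧ k ≤ n - 1 ∧ x = α * sigma n k * α⁻¹}

/-! Quasipositive braids form a conjugation-invariant monoid containing the strongly
quasipositive ones, so `a⁻¹ β b β' c β'' = (a⁻¹ β a) ((a⁻¹ b) β' (a⁻¹ b)⁻¹) (a⁻¹ b c) β''` is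
quasipositive as soon as `a⁻¹ b c` is. For both triples of bands, `a⁻¹ b c` is a conjugate of `σ₂`:
`σ₁⁻¹ (σ₂ σ₁ σ₂⁻¹) σ₂ = σ₁⁻¹ σ₂ σ₁`, and, since `σ₁` and `σ₃` commute,
`σ₁⁻¹ (σ₃ σ₂ σ₁ σ₂⁻¹ σ₃⁻¹) (σ₃ σ₂ σ₃⁻¹) = (σ₁⁻¹ σ₃) σ₂ (σ₁⁻¹ σ₃)⁻¹`. -/

section

variable {n : ℕ}

theorem quasipositive_conj_sigma (α : BraidGroup n) {k : ℕ} (hk : 1 ≤ k) (hkn : k ≤ n - 1) :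
    Quasipositive n (α * sigma n k * α⁻¹) :=
  Submonoid.subset_closure ⟨α, k, hk, hkn, rfl⟩

theorem Quasipositive.mul {x y : BraidGroup n} (hx : Quasipositive n x)
    (hy : Quasipositive n y) : Quasipositive n (x * y) :=
  Submonoid.mul_mem _ hx hy

theorem Quasipositive.conj (g : BraidGroup n) {x : BraidGroup n} (hx : Quasipositive n x) :
    Quasipositive n (g * x * g⁻¹) := by
  induction hx using Submonoid.closure_induction with
  | mem y hy =>
    obtain ⟨α, k, hk, hkn, rfl⟩ := hy
    simpa only [mul_assoc, mul_inv_rev] using quasipositive_conj_sigma (g * α) hk hkn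
  | one =>
    rw [mul_one, mul_inv_cancel]
    exact Submonoid.one_mem _
  | mul y z _ _ hy hz =>
    simpa only [mul_assoc, inv_mul_cancel_left] using hy.mul hz

theorem StronglyQuasipositive.quasipositive {x : BraidGroup n}
    (hx : StronglyQuasipositive n x) : Quasipositive n x := by
  refine Submonoid.closure_le.2 ?_ hx
  rintro y ⟨i, j, hi, hij, hjn, rfl⟩
  exact quasipositive_conj_sigma (bandConj n i j) hi (by omega)

theorem Quasipositive.inv_mul_interleave {a b c β β' β'' : BraidGroup n}
    (h : Quasipositive n (a⁻¹ * b * c)) (hβ : Quasipositive n β) (hβ' : Quasipositive n β')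
    (hβ'' : Quasipositive n β'') : Quasipositive n (a⁻¹ * β * b * β' * c * β'') := by
  have hsplit : a⁻¹ * β * b * β' * c * β'' =
      (a⁻¹ * β * a⁻¹⁻¹) * ((a⁻¹ * b) * β' * (a⁻¹ * b)⁻¹) * (a⁻¹ * b * c) * β'' := by group
  rw [hsplit]
  exact (((hβ.conj _).mul (hβ'.conj _)).mul h).mul hβ''

theorem sigma_commute {i j : ℕ} (hij : i + 1 < j) : Commute (sigma n i) (sigma n j) := by
  unfold sigma
  split_ifs with hi hj
  · rw [← commutatorElement_eq_one_iff_commute, commutatorElement_def]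
    exact PresentedGroup.one_of_mem (Or.inl ⟨_, _, by simp only; omega, rfl⟩)
  all_goals simp

theorem band_self_succ (i : ℕ) : band n i (i + 1) = sigma n i := by
  simp [band, bandConj]

theorem bandConj_succ {i j : ℕ} (hij : i < j) :
    bandConj n i (j + 1) = sigma n j * bandConj n i j := by
  obtain ⟨m, rfl⟩ : ∃ m, j = i + 1 + m := ⟨j - (i + 1), by omega⟩
  simp only [bandConj, show i + 1 + m + 1 - 1 - i = m + 1 by omega, List.range_succ_eq_map,
    List.map_cons, List.map_map, List.prod_cons, show i + 1 + m - 1 - i = m by omega]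
  congr 2
  refine List.map_congr_left fun t _ => ?_
  simp only [Function.comp_apply, Nat.succ_eq_add_one]
  congr 1
  omega

theorem band_succ {i j : ℕ} (hij : i < j) :
    band n i (j + 1) = sigma n j * band n i j * (sigma n j)⁻¹ := by
  simp only [band, bandConj_succ hij, mul_inv_rev, mul_assoc]

theorem quasipositive_band_inv_mul_band_add_two_mul_band {i : ℕ} (hin : i + 2 ≤ n) :
    Quasipositive n ((band n i (i + 1))⁻¹ * band n i (i + 2) * band n (i + 1) (i + 2)) := by
  have hconj : (band n i (i + 1))⁻¹ * band n i (i + 2) * band n (i + 1) (i + 2) =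
      (sigma n i)⁻¹ * sigma n (i + 1) * (sigma n i)⁻¹⁻¹ := by
    rw [band_self_succ, band_self_succ, band_succ (by omega), band_self_succ]
    group
  rw [hconj]
  exact quasipositive_conj_sigma _ (by omega) (by omega)

theorem quasipositive_band_inv_mul_band_add_three_mul_band {i : ℕ} (hin : i + 3 ≤ n) :
    Quasipositive n ((band n i (i + 1))⁻¹ * band n i (i + 3) * band n (i + 1) (i + 3)) := by
  have hcomm : Commute (sigma n i) (sigma n (i + 2))⁻¹ := (sigma_commute (by omega)).inv_right
  have hconj : (band n i (i + 1))⁻¹ * band n i (i + 3) * band n (i + 1) (i + 3) =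
      ((sigma n i)⁻¹ * sigma n (i + 2)) * sigma n (i + 1) *
        ((sigma n i)⁻¹ * sigma n (i + 2))⁻¹ := by
    rw [band_self_succ, band_succ (i := i) (by omega), band_succ (i := i) (by omega),
      band_succ (i := i + 1) (by omega), band_self_succ, band_self_succ]
    simp only [mul_inv_rev, inv_inv, mul_assoc, inv_mul_cancel_left, hcomm.eq]
  rw [hconj]
  exact quasipositive_conj_sigma _ (by omega) (by omega)

end

/-- In `B₄`, for strongly quasipositive `β, β', β''`, the braids
`σ_{1,2}⁻¹ β σ_{1,3} β' σ_{2,3} β''` and `σ_{1,2}⁻¹ β σ_{1,4} β' σ_{2,4} β''`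
are quasipositive. -/
theorem claim_obs1 (β β' β'' : BraidGroup 4)
    (hβ : StronglyQuasipositive 4 β) (hβ' : StronglyQuasipositive 4 β')
    (hβ'' : StronglyQuasipositive 4 β'') :
    Quasipositive 4 ((band 4 1 2)⁻¹ * β * band 4 1 3 * β' * band 4 2 3 * β'') ∧
    Quasipositive 4 ((band 4 1 2)⁻¹ * β * band 4 1 4 * β' * band 4 2 4 * β'') :=
  ⟨(quasipositive_band_inv_mul_band_add_two_mul_band (i := 1) (by norm_num)).inv_mul_interleave
      hβ.quasipositive hβ'.quasipositive hβ''.quasipositive,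
    (quasipositive_band_inv_mul_band_add_three_mul_band (i := 1) le_rfl).inv_mul_interleave
      hβ.quasipositive hβ'.quasipositive hβ''.quasipositive⟩
end

section
/- In B_4, for every integer n ≥ 3 and all integers r_1, …, r_n ≥ 1 and s_1, …, s_{n−1} ≥ 1, the braid σ_{1,2}^{−1} σ_{2,4}^{r_1} σ_{1,3}^{s_1} σ_{2,4}^{r_2} σ_{1,3}^{s_2} ⋯ σ_{2,4}^{r_{n−1}} σ_{1,3}^{s_{n−1}} σ_{2,4}^{r_n} is quasipositive. -/
/-! ### Auxiliary development -/

section Aux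

lemma rel_one {n : ℕ} {r : FreeGroup (Fin (n-1))} (h : r ∈ braidRels n) :
    PresentedGroup.mk (braidRels n) r = 1 :=
  (QuotientGroup.eq_one_iff r).mpr (Subgroup.subset_normalClosure h)

/-- `σ₁` in `B₄`. -/
noncomputable def bt : BraidGroup 4 := sigma 4 1
/-- `σ₂` in `B₄`. -/
noncomputable def bu : BraidGroup 4 := sigma 4 2
/-- `σ₃` in `B₄`. -/
noncomputable def bv : BraidGroup 4 := sigma 4 3

lemma bt_eq : bt = (PresentedGroup.mk (braidRels 4)) (FreeGroup.of 0) := by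
  rw [bt, sigma, dif_pos (by norm_num : 1 ≤ 1 ∧ 1 ≤ 4 - 1)]; rfl

lemma bu_eq : bu = (PresentedGroup.mk (braidRels 4)) (FreeGroup.of 1) := by
  rw [bu, sigma, dif_pos (by norm_num : 1 ≤ 2 ∧ 2 ≤ 4 - 1)]; rfl

lemma bv_eq : bv = (PresentedGroup.mk (braidRels 4)) (FreeGroup.of 2) := by
  rw [bv, sigma, dif_pos (by norm_num : 1 ≤ 3 ∧ 3 ≤ 4 - 1)]; rfl

lemma rel_tut : bt * bu * bt = bu * bt * bu := by
  have h := rel_one (n := 4) (Or.inr ⟨0, 1, rfl, rfl⟩)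
  simp only [map_mul, map_inv] at h
  rw [bt_eq, bu_eq]
  exact mul_inv_eq_one.mp h

lemma rel_uvu : bu * bv * bu = bv * bu * bv := by
  have h := rel_one (n := 4) (Or.inr ⟨1, 2, rfl, rfl⟩)
  simp only [map_mul, map_inv] at h
  rw [bu_eq, bv_eq]
  exact mul_inv_eq_one.mp h

lemma rel_tv : bt * bv = bv * bt := by
  have h := rel_one (n := 4) (Or.inl ⟨0, 2, by norm_num, rfl⟩)
  simp only [map_mul, map_inv] at h
  rw [bt_eq, bv_eq]
  have h' : ((PresentedGroup.mk (braidRels 4)) (FreeGroup.of 0) *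
      (PresentedGroup.mk (braidRels 4)) (FreeGroup.of 2)) *
      ((PresentedGroup.mk (braidRels 4)) (FreeGroup.of 2) *
      (PresentedGroup.mk (braidRels 4)) (FreeGroup.of 0))⁻¹ = 1 := by
    rw [← h]; group
  have := mul_inv_eq_one.mp h'
  exact this

lemma rel_step {G : Type*} [Group G] {P Q : G} {A B : G} (c : G) (h : P = Q)
    (hc : A * B⁻¹ = c * (P * Q⁻¹) * c⁻¹) : A = B :=
  calc A = c * (P * Q⁻¹) * c⁻¹ * B := by rw [← hc]; group
  _ = B := by rw [h]; group

lemma band24 : band 4 2 4 = bv * bu * bv⁻¹ := by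
  have h : bandConj 4 2 4 = bv := by
    simp [bandConj, List.range_succ, List.range_zero, bv]
  rw [band, h]; rfl

lemma band13 : band 4 1 3 = bu * bt * bu⁻¹ := by
  have h : bandConj 4 1 3 = bu := by
    simp [bandConj, List.range_succ, List.range_zero, bu]
  rw [band, h]; rfl

lemma band12 : band 4 1 2 = bt := by
  have h : bandConj 4 1 2 = 1 := by
    simp [bandConj]
  rw [band, h]; group; rfl

end Aux
section AbstractCore

variable {G : Type*} [Group G]

set_option maxHeartbeats 4000000 in
/-- The core identity, in any group with elements satisfying the `B₄` braid relations:
`t⁻¹ (vuv⁻¹)(utu⁻¹)(vuv⁻¹)(utu⁻¹)(vuv⁻¹)` is a product of four conjugates of generators. -/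
lemma abstract_core (t u v : G) (h1 : t * u * t = u * t * u) (h2 : u * v * u = v * u * v)
    (h3 : t * v = v * t) :
    t⁻¹ * (v * u * v⁻¹) * (u * t * u⁻¹) * (v * u * v⁻¹) * (u * t * u⁻¹) * (v * u * v⁻¹) =
    ((t⁻¹ * u⁻¹ * v) * u * (t⁻¹ * u⁻¹ * v)⁻¹) * (v * u * v⁻¹) * u *
      ((t * v) * u * (t * v)⁻¹) := by
  have main :
      t⁻¹ * v * u * v⁻¹ * u * t * u⁻¹ * v * u * v⁻¹ * u * t * u⁻¹ * v * u * v⁻¹ =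
      t⁻¹ * u⁻¹ * v * u * v⁻¹ * u * t * v * u * v⁻¹ * u * t * v * u * v⁻¹ * t⁻¹ :=
  calc t⁻¹ * v * u * v⁻¹ * u * t * u⁻¹ * v * u * v⁻¹ * u * t * u⁻¹ * v * u * v⁻¹
    _ = t⁻¹ * v * u * v⁻¹ * u * t * u⁻¹ * v * u * t⁻¹ * v⁻¹ * t * u * t * u⁻¹ * v * u * v⁻¹ := rel_step (t⁻¹ * v * u * v⁻¹ * u * t * u⁻¹ * v * u * t⁻¹ * v⁻¹) h3.symm (by group; try rw [zpow_two]; try group)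
    _ = t⁻¹ * v * u * v⁻¹ * u * t * u⁻¹ * v * u * t⁻¹ * v⁻¹ * u * t * v * u * v⁻¹ := rel_step (t⁻¹ * v * u * v⁻¹ * u * t * u⁻¹ * v * u * t⁻¹ * v⁻¹) h1 (by group; try rw [zpow_two]; try group)
    _ = t⁻¹ * v * u * v⁻¹ * u * t * u⁻¹ * v * u * t⁻¹ * u * v * u⁻¹ * v⁻¹ * t * v * u * v⁻¹ := rel_step (t⁻¹ * v * u * v⁻¹ * u * t * u⁻¹ * v * u * t⁻¹ * u * v * u⁻¹ * v⁻¹ * u⁻¹) h2 (by group; try rw [zpow_two]; try group)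
    _ = t⁻¹ * v * u * v⁻¹ * u * t * u⁻¹ * v * u * t⁻¹ * u * t * v * t⁻¹ * u⁻¹ * v⁻¹ * t * v * u * v⁻¹ := rel_step (t⁻¹ * v * u * v⁻¹ * u * t * u⁻¹ * v * u * t⁻¹ * u) h3.symm (by group; try rw [zpow_two]; try group)
    _ = t⁻¹ * v * u * v⁻¹ * u * t * u⁻¹ * v * u * t⁻¹ * u * t * v * t⁻¹ * u⁻¹ * t * u * v⁻¹ := rel_step (t⁻¹ * v * u * v⁻¹ * u * t * u⁻¹ * v * u * t⁻¹ * u * t * v * t⁻¹ * u⁻¹ * t * v⁻¹ * t⁻¹) h3 (by group; try rw [zpow_two]; try group)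
    _ = t⁻¹ * v * u * v⁻¹ * u * t * u⁻¹ * v * u * t⁻¹ * u * t * v * u * t⁻¹ * v⁻¹ := rel_step (t⁻¹ * v * u * v⁻¹ * u * t * u⁻¹ * v * u * t⁻¹ * u * t * v * u * t⁻¹ * u⁻¹ * t⁻¹) h1 (by group; try rw [zpow_two]; try group)
    _ = t⁻¹ * v * u * v⁻¹ * u * t * u⁻¹ * v * u * t⁻¹ * u * t * v * u * v⁻¹ * t⁻¹ := rel_step (t⁻¹ * v * u * v⁻¹ * u * t * u⁻¹ * v * u * t⁻¹ * u * t * v * u * v⁻¹ * t⁻¹) h3 (by group; try rw [zpow_two]; try group)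
    _ = t⁻¹ * v * u * v⁻¹ * u * t * u⁻¹ * v * u * v * t⁻¹ * v⁻¹ * u * t * v * u * v⁻¹ * t⁻¹ := rel_step (t⁻¹ * v * u * v⁻¹ * u * t * u⁻¹ * v * u * t⁻¹) h3.symm (by group; try rw [zpow_two]; try group)
    _ = t⁻¹ * v * u * v⁻¹ * u * t * v * u * t⁻¹ * v⁻¹ * u * t * v * u * v⁻¹ * t⁻¹ := rel_step (t⁻¹ * v * u * v⁻¹ * u * t * u⁻¹) h2.symm (by group; try rw [zpow_two]; try group)
    _ = t⁻¹ * v * u * v⁻¹ * u * t * v * t⁻¹ * u⁻¹ * t * u * v⁻¹ * u * t * v * u * v⁻¹ * t⁻¹ := rel_step (t⁻¹ * v * u * v⁻¹ * u * t * v * u * t⁻¹ * u⁻¹ * t⁻¹) h1.symm (by group; try rw [zpow_two]; try group)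
    _ = t⁻¹ * v * u * v⁻¹ * u * t * v * t⁻¹ * u⁻¹ * v⁻¹ * t * v * u * v⁻¹ * u * t * v * u * v⁻¹ * t⁻¹ := rel_step (t⁻¹ * v * u * v⁻¹ * u * t * v * t⁻¹ * u⁻¹ * t * v⁻¹ * t⁻¹) h3.symm (by group; try rw [zpow_two]; try group)
    _ = t⁻¹ * v * u * v⁻¹ * u * v * u⁻¹ * v⁻¹ * t * v * u * v⁻¹ * u * t * v * u * v⁻¹ * t⁻¹ := rel_step (t⁻¹ * v * u * v⁻¹ * u) h3 (by group; try rw [zpow_two]; try group)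
    _ = t⁻¹ * v * u * v⁻¹ * v⁻¹ * u * t * v * u * v⁻¹ * u * t * v * u * v⁻¹ * t⁻¹ := rel_step (t⁻¹ * v * u * v⁻¹ * u * v * u⁻¹ * v⁻¹ * u⁻¹) h2.symm (by group; try rw [zpow_two]; try group)
    _ = t⁻¹ * u⁻¹ * v * u * v⁻¹ * u * t * v * u * v⁻¹ * u * t * v * u * v⁻¹ * t⁻¹ := rel_step (t⁻¹ * v * u * v⁻¹ * u⁻¹ * v⁻¹) h2 (by group; try rw [zpow_two]; try group)
  calc t⁻¹ * (v * u * v⁻¹) * (u * t * u⁻¹) * (v * u * v⁻¹) * (u * t * u⁻¹) * (v * u * v⁻¹)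
      = t⁻¹ * v * u * v⁻¹ * u * t * u⁻¹ * v * u * v⁻¹ * u * t * u⁻¹ * v * u * v⁻¹ := by
        group
    _ = t⁻¹ * u⁻¹ * v * u * v⁻¹ * u * t * v * u * v⁻¹ * u * t * v * u * v⁻¹ * t⁻¹ := main
    _ = ((t⁻¹ * u⁻¹ * v) * u * (t⁻¹ * u⁻¹ * v)⁻¹) * (v * u * v⁻¹) * u *
        ((t * v) * u * (t * v)⁻¹) := by group

end AbstractCore

lemma core_eq :
    bt⁻¹ * (bv * bu * bv⁻¹) * (bu * bt * bu⁻¹) * (bv * bu * bv⁻¹) * (bu * bt * bu⁻¹) *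
      (bv * bu * bv⁻¹) =
    ((bt⁻¹ * bu⁻¹ * bv) * bu * (bt⁻¹ * bu⁻¹ * bv)⁻¹) * (bv * bu * bv⁻¹) * bu *
      ((bt * bv) * bu * (bt * bv)⁻¹) :=
  abstract_core bt bu bv rel_tut rel_uvu rel_tv
section Membership

/-- The generating set for quasipositivity in `B₄`. -/
abbrev QPset : Set (BraidGroup 4) :=
  {x : BraidGroup 4 | ∃ (α : BraidGroup 4) (k : ℕ), 1 ≤ k ∧ k ≤ 4 - 1 ∧ x = α * sigma 4 k * α⁻¹}

lemma quasi_of_mem {x : BraidGroup 4} (h : x ∈ Submonoid.closure QPset) : Quasipositive 4 x := h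

lemma mem_QPset_conj {x : BraidGroup 4} (hx : x ∈ QPset) (g : BraidGroup 4) :
    g * x * g⁻¹ ∈ QPset := by
  obtain ⟨α, k, h1, h2, rfl⟩ := hx
  exact ⟨g * α, k, h1, h2, by group⟩

lemma bu_mem : bu ∈ QPset := ⟨1, 2, by norm_num, by norm_num, by group; rfl⟩

lemma band24_mem : band 4 2 4 ∈ QPset := by
  rw [band24]
  exact ⟨bv, 2, by norm_num, by norm_num, rfl⟩

lemma band13_mem : band 4 1 3 ∈ QPset := by
  rw [band13]
  exact ⟨bu, 1, by norm_num, by norm_num, rfl⟩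

private lemma conj_peel {G : Type*} [Group G] (p c y : G) (k : ℕ) :
    p * c ^ (k + 1) * y = (p * c * p⁻¹) ^ k * (p * c * y) := by
  rw [pow_succ, conj_pow]
  group

lemma peel_mem {p c y : BraidGroup 4} (hc : c ∈ QPset) {m : ℕ} (hm : 1 ≤ m)
    (h : p * c * y ∈ Submonoid.closure QPset) : p * c ^ m * y ∈ Submonoid.closure QPset := by
  obtain ⟨k, rfl⟩ : ∃ k, m = k + 1 := ⟨m - 1, by omega⟩
  rw [conj_peel]
  exact mul_mem (pow_mem (Submonoid.subset_closure (mem_QPset_conj hc p)) k) h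

/-- The base case: `σ₁⁻¹ a^{r₁} b^{s₁} a^{r₂} b^{s₂} a^{r₃}` is quasipositive. -/
lemma base_mem (r1 s1 r2 s2 r3 : ℕ) (hr1 : 1 ≤ r1) (hs1 : 1 ≤ s1) (hr2 : 1 ≤ r2)
    (hs2 : 1 ≤ s2) (hr3 : 1 ≤ r3) :
    bt⁻¹ * band 4 2 4 ^ r1 *
      (band 4 1 3 ^ s1 * (band 4 2 4 ^ r2 * (band 4 1 3 ^ s2 * band 4 2 4 ^ r3))) ∈
      Submonoid.closure QPset := by
  apply peel_mem band24_mem hr1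
  rw [show bt⁻¹ * band 4 2 4 * (band 4 1 3 ^ s1 * (band 4 2 4 ^ r2 * (band 4 1 3 ^ s2 * band 4 2 4 ^ r3)))
      = (bt⁻¹ * band 4 2 4) * band 4 1 3 ^ s1 * (band 4 2 4 ^ r2 * (band 4 1 3 ^ s2 * band 4 2 4 ^ r3))
      from by group]
  apply peel_mem band13_mem hs1
  rw [show bt⁻¹ * band 4 2 4 * band 4 1 3 * (band 4 2 4 ^ r2 * (band 4 1 3 ^ s2 * band 4 2 4 ^ r3))
      = (bt⁻¹ * band 4 2 4 * band 4 1 3) * band 4 2 4 ^ r2 * (band 4 1 3 ^ s2 * band 4 2 4 ^ r3)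
      from by group]
  apply peel_mem band24_mem hr2
  rw [show bt⁻¹ * band 4 2 4 * band 4 1 3 * band 4 2 4 * (band 4 1 3 ^ s2 * band 4 2 4 ^ r3)
      = (bt⁻¹ * band 4 2 4 * band 4 1 3 * band 4 2 4) * band 4 1 3 ^ s2 * band 4 2 4 ^ r3
      from by group]
  apply peel_mem band13_mem hs2
  rw [show bt⁻¹ * band 4 2 4 * band 4 1 3 * band 4 2 4 * band 4 1 3 * band 4 2 4 ^ r3
      = (bt⁻¹ * band 4 2 4 * band 4 1 3 * band 4 2 4 * band 4 1 3) * band 4 2 4 ^ r3 * 1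
      from by group]
  apply peel_mem band24_mem hr3
  rw [show bt⁻¹ * band 4 2 4 * band 4 1 3 * band 4 2 4 * band 4 1 3 * band 4 2 4 * 1
      = bt⁻¹ * band 4 2 4 * band 4 1 3 * band 4 2 4 * band 4 1 3 * band 4 2 4 from by group]
  rw [band24, band13]
  rw [show bt⁻¹ * (bv * bu * bv⁻¹) * (bu * bt * bu⁻¹) * (bv * bu * bv⁻¹) * (bu * bt * bu⁻¹) *
      (bv * bu * bv⁻¹) =
      ((bt⁻¹ * bu⁻¹ * bv) * bu * (bt⁻¹ * bu⁻¹ * bv)⁻¹) * (bv * bu * bv⁻¹) * bu *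
      ((bt * bv) * bu * (bt * bv)⁻¹) from core_eq]
  refine mul_mem (mul_mem (mul_mem ?_ ?_) ?_) ?_
  · exact Submonoid.subset_closure (mem_QPset_conj bu_mem _)
  · exact Submonoid.subset_closure (by rw [← band24]; exact band24_mem)
  · exact Submonoid.subset_closure bu_mem
  · exact Submonoid.subset_closure (mem_QPset_conj bu_mem _)

end Membership
section Main

lemma main_mem (r s : ℕ → ℕ) (m : ℕ) (hm : 2 ≤ m)
    (hr : ∀ k : ℕ, 1 ≤ k → k ≤ m + 1 → 1 ≤ r k)
    (hs : ∀ k : ℕ, 1 ≤ k → k ≤ m → 1 ≤ s k) :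
    (band 4 1 2)⁻¹ * band 4 2 4 ^ r 1 *
      ((List.range m).map fun t => band 4 1 3 ^ s (t + 1) * band 4 2 4 ^ r (t + 2)).prod ∈
      Submonoid.closure QPset := by
  revert hr hs
  induction m, hm using Nat.le_induction with
  | base =>
    intro hr hs
    have e2 : (List.range 2) = [0, 1] := rfl
    rw [e2]
    simp only [List.map_cons, List.map_nil, List.prod_cons, List.prod_nil, mul_one, band12]
    rw [show bt⁻¹ * band 4 2 4 ^ r 1 *
        (band 4 1 3 ^ s (0 + 1) * band 4 2 4 ^ r (0 + 2) *
          (band 4 1 3 ^ s (1 + 1) * band 4 2 4 ^ r (1 + 2))) =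
        bt⁻¹ * band 4 2 4 ^ r 1 *
        (band 4 1 3 ^ s 1 * (band 4 2 4 ^ r 2 * (band 4 1 3 ^ s 2 * band 4 2 4 ^ r 3)))
        from by norm_num; group]
    exact base_mem _ _ _ _ _ (hr 1 (by norm_num) (by norm_num))
      (hs 1 (by norm_num) (by norm_num)) (hr 2 (by norm_num) (by norm_num))
      (hs 2 (by norm_num) (by norm_num)) (hr 3 (by norm_num) (by norm_num))
  | succ m hm ih =>
    intro hr hs
    rw [List.range_succ, List.map_append, List.prod_append, List.map_cons, List.map_nil,
      List.prod_cons, List.prod_nil, mul_one, ← mul_assoc]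
    exact mul_mem
      (ih (fun k h1 h2 => hr k h1 (by omega)) (fun k h1 h2 => hs k h1 (by omega)))
      (mul_mem (pow_mem (Submonoid.subset_closure band13_mem) _)
        (pow_mem (Submonoid.subset_closure band24_mem) _))

end Main

/-- In `B₄`, for `n ≥ 3` and exponents `r₁, …, rₙ ≥ 1`, `s₁, …, s_{n-1} ≥ 1`, the braid
`σ_{1,2}⁻¹ σ_{2,4}^{r₁} σ_{1,3}^{s₁} σ_{2,4}^{r₂} ⋯ σ_{2,4}^{r_{n-1}} σ_{1,3}^{s_{n-1}} σ_{2,4}^{rₙ}`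
is quasipositive. -/
theorem alternating_word_quasipositive (n : ℕ) (hn : 3 ≤ n) (r s : ℕ → ℕ)
    (hr : ∀ k : ℕ, 1 ≤ k → k ≤ n → 1 ≤ r k)
    (hs : ∀ k : ℕ, 1 ≤ k → k ≤ n - 1 → 1 ≤ s k) :
    Quasipositive 4
      ((band 4 1 2)⁻¹ * band 4 2 4 ^ r 1 *
        ((List.range (n - 1)).map fun t =>
          band 4 1 3 ^ s (t + 1) * band 4 2 4 ^ r (t + 2)).prod) := by
  apply quasi_of_mem
  exact main_mem r s (n - 1) (by omega)
    (fun k h1 h2 => hr k h1 (by omega))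
    (fun k h1 h2 => hs k h1 (by omega))
end

section
/- In B_4, for all integers v, w, y ≥ 0 and x, z ≥ 1, one has the equality σ_{2,3}^{v} σ_{3,4}^{y+1} σ_{2,3}^{w} σ_{1,3}^{x} σ_{3,4}^{−1} σ_{2,3}^{z−1} σ_{1,3}^{−1} σ_{2,3} = σ_{2,3}^{v} σ_{3,4}^{y} σ_{2,4}^{w} σ_{2,3}^{z−1} σ_{1,3}^{−1} σ_{3,4}^{x} σ_{2,3}; moreover this braid is conjugate in B_4 to sh(γ)·σ_{1,3}^{−1}, where γ = σ_2^{x} σ_1^{v+1} σ_2^{y} σ_{1,3}^{w} σ_1^{z−1} is a strongly quasipositive 3-braid and sh : B_3 → B_4 is the shift homomorphism σ_k ↦ σ_{k+1}. -/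
lemma braidRel_eq_one {n : ℕ} {r : FreeGroup (Fin (n - 1))} (hr : r ∈ braidRels n) :
    PresentedGroup.mk (braidRels n) r = 1 :=
  (QuotientGroup.eq_one_iff r).mpr (Subgroup.subset_normalClosure hr)

/-- The homomorphism `B_m → B_n` sending `σ_k` to `σ_{k+d}`. -/
def braidHom (m n d : ℕ) (h : m - 1 + d ≤ n - 1) : BraidGroup m →* BraidGroup n :=
  PresentedGroup.toGroup (f := fun k : Fin (m - 1) =>
      (PresentedGroup.of (⟨(k : ℕ) + d, by omega⟩ : Fin (n - 1)) : BraidGroup n)) (by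
    rintro r hr
    rcases hr with ⟨i, j, hij, rfl⟩ | ⟨i, j, hij, rfl⟩
    · have key := braidRel_eq_one (n := n) (Or.inl
        ⟨⟨(i : ℕ) + d, by omega⟩, ⟨(j : ℕ) + d, by omega⟩, by simpa using by omega, rfl⟩)
      simpa [PresentedGroup.of, map_mul, map_inv] using key
    · have key := braidRel_eq_one (n := n) (Or.inr
        ⟨⟨(i : ℕ) + d, by omega⟩, ⟨(j : ℕ) + d, by omega⟩, by simpa using by omega, rfl⟩)
      simpa [PresentedGroup.of, map_mul, map_inv] using key)

section AbstractBraid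
variable {G : Type*} [Group G] (a b c : G)

lemma braid_aux (hab : a * b * a = b * a * b) : a⁻¹ * b * a = b * a * b⁻¹ := by
  calc a⁻¹ * b * a = a⁻¹ * (b * a * b) * b⁻¹ := by group
    _ = a⁻¹ * (a * b * a) * b⁻¹ := by rw [hab]
    _ = b * a * b⁻¹ := by group

lemma braid_pow (hab : a * b * a = b * a * b) (x : ℕ) :
    a⁻¹ * b ^ x * a = b * a ^ x * b⁻¹ := by
  have h1 : (a⁻¹ * b * a⁻¹⁻¹) ^ x = a⁻¹ * b ^ x * a⁻¹⁻¹ := conj_pow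
  rw [inv_inv] at h1
  rw [← h1, braid_aux a b hab, conj_pow]

lemma braid_Kid (hab : a * b * a = b * a * b) (hbc : b * c * b = c * b * c)
    (hac : a * c = c * a) (x : ℕ) :
    c * b * a ^ x * b⁻¹ * c⁻¹ = a⁻¹ * (b⁻¹ * c ^ x * b) * a := by
  have hC : Commute a c := hac
  have h1 : a⁻¹ * c = c * a⁻¹ := hC.inv_left.eq
  have h2 : c⁻¹ * a = a * c⁻¹ := hC.inv_right.symm.eq
  rw [braid_pow b c hbc x]
  calc c * b * a ^ x * b⁻¹ * c⁻¹
      = c * (a⁻¹ * b ^ x * a) * c⁻¹ := by rw [braid_pow a b hab x]; group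
    _ = (c * a⁻¹) * b ^ x * (a * c⁻¹) := by group
    _ = (a⁻¹ * c) * b ^ x * (c⁻¹ * a) := by rw [h1, h2]
    _ = a⁻¹ * (c * b ^ x * c⁻¹) * a := by group

lemma braid_Kcomm (hbc : b * c * b = c * b * c) (hac : a * c = c * a) (x : ℕ) :
    Commute (c * b * a ^ x * b⁻¹ * c⁻¹) b := by
  have hC : Commute a c := hac
  have hx : c⁻¹ * a ^ x * c = a ^ x := by
    have h := (hC.pow_left x).eq
    calc c⁻¹ * a ^ x * c = c⁻¹ * (a ^ x * c) := by group
      _ = c⁻¹ * (c * a ^ x) := by rw [h]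
      _ = a ^ x := by group
  have key : b⁻¹ * (c * b * a ^ x * b⁻¹ * c⁻¹) * b = c * b * a ^ x * b⁻¹ * c⁻¹ := by
    calc b⁻¹ * (c * b * a ^ x * b⁻¹ * c⁻¹) * b
        = (b⁻¹ * c * b) * a ^ x * ((b⁻¹ * c * b))⁻¹ := by group
      _ = (c * b * c⁻¹) * a ^ x * (c * b * c⁻¹)⁻¹ := by rw [braid_aux b c hbc]
      _ = c * b * (c⁻¹ * a ^ x * c) * b⁻¹ * c⁻¹ := by group
      _ = c * b * a ^ x * b⁻¹ * c⁻¹ := by rw [hx]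
  show (c * b * a ^ x * b⁻¹ * c⁻¹) * b = b * (c * b * a ^ x * b⁻¹ * c⁻¹)
  calc (c * b * a ^ x * b⁻¹ * c⁻¹) * b
      = b * (b⁻¹ * (c * b * a ^ x * b⁻¹ * c⁻¹) * b) := by group
    _ = b * (c * b * a ^ x * b⁻¹ * c⁻¹) := by rw [key]

lemma braid_main (hab : a * b * a = b * a * b) (hbc : b * c * b = c * b * c)
    (hac : a * c = c * a) (x z : ℕ) :
    b * a ^ x * b⁻¹ * c⁻¹ * b ^ z * a⁻¹ = c⁻¹ * b ^ z * a⁻¹ * b⁻¹ * c ^ x * b := by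
  have hKb := (braid_Kcomm a b c hbc hac x).pow_right z
  calc b * a ^ x * b⁻¹ * c⁻¹ * b ^ z * a⁻¹
      = c⁻¹ * ((c * b * a ^ x * b⁻¹ * c⁻¹) * b ^ z) * a⁻¹ := by group
    _ = c⁻¹ * (b ^ z * (c * b * a ^ x * b⁻¹ * c⁻¹)) * a⁻¹ := by rw [hKb.eq]
    _ = c⁻¹ * b ^ z * ((c * b * a ^ x * b⁻¹ * c⁻¹) * a⁻¹) := by group
    _ = c⁻¹ * b ^ z * ((a⁻¹ * (b⁻¹ * c ^ x * b) * a) * a⁻¹) := by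
        rw [braid_Kid a b c hab hbc hac x]
    _ = c⁻¹ * b ^ z * a⁻¹ * b⁻¹ * c ^ x * b := by group

lemma braid_W (hab : a * b * a = b * a * b) (hbc : b * c * b = c * b * c)
    (hac : a * c = c * a) (v w y m x : ℕ) :
    b ^ v * c ^ (y+1) * b ^ w * (b*a*b⁻¹) ^ x * c⁻¹ * b ^ m * (b*a*b⁻¹)⁻¹ * b
      = b ^ v * c ^ (y+1) * b ^ w * c⁻¹ * b ^ (m+1) * a⁻¹ * b⁻¹ * c ^ x * b := by
  have h1 : (b*a*b⁻¹) ^ x = b * a ^ x * b⁻¹ := conj_pow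
  have h2 := braid_main a b c hab hbc hac x (m+1)
  rw [h1]
  calc b ^ v * c ^ (y+1) * b ^ w * (b * a ^ x * b⁻¹) * c⁻¹ * b ^ m * (b*a*b⁻¹)⁻¹ * b
      = b ^ v * c ^ (y+1) * b ^ w * (b * a ^ x * b⁻¹ * c⁻¹ * b ^ (m+1) * a⁻¹) := by group
    _ = b ^ v * c ^ (y+1) * b ^ w * (c⁻¹ * b ^ (m+1) * a⁻¹ * b⁻¹ * c ^ x * b) := by rw [h2]
    _ = b ^ v * c ^ (y+1) * b ^ w * c⁻¹ * b ^ (m+1) * a⁻¹ * b⁻¹ * c ^ x * b := by group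

lemma braid_eq1 (hab : a * b * a = b * a * b) (hbc : b * c * b = c * b * c)
    (hac : a * c = c * a) (v w y m x : ℕ) :
    b ^ v * c ^ (y+1) * b ^ w * (b*a*b⁻¹) ^ x * c⁻¹ * b ^ m * (b*a*b⁻¹)⁻¹ * b
      = b ^ v * c ^ y * (c*b*c⁻¹) ^ w * b ^ m * (b*a*b⁻¹)⁻¹ * c ^ x * b := by
  rw [braid_W a b c hab hbc hac v w y m x,
    show (c*b*c⁻¹) ^ w = c * b ^ w * c⁻¹ from conj_pow]
  group

lemma braid_eq3 (hab : a * b * a = b * a * b) (hbc : b * c * b = c * b * c)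
    (hac : a * c = c * a) (v w y m x : ℕ) :
    (c ^ x * b) * (b ^ v * c ^ (y+1) * b ^ w * (b*a*b⁻¹) ^ x * c⁻¹ * b ^ m *
        (b*a*b⁻¹)⁻¹ * b) * (c ^ x * b)⁻¹
      = c ^ x * b ^ (v+1) * c ^ y * (c*b*c⁻¹) ^ w * b ^ m * (b*a*b⁻¹)⁻¹ := by
  rw [braid_W a b c hab hbc hac v w y m x,
    show (c*b*c⁻¹) ^ w = c * b ^ w * c⁻¹ from conj_pow]
  group

end AbstractBraid

lemma braid_comm_of {n : ℕ} (i j : Fin (n-1)) (h : (i:ℕ)+1 < (j:ℕ)) :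
    (PresentedGroup.of i : BraidGroup n) * PresentedGroup.of j
      = PresentedGroup.of j * PresentedGroup.of i := by
  have key := braidRel_eq_one (n := n) (Or.inl ⟨i, j, h, rfl⟩)
  simp only [map_mul, map_inv] at key
  have key2 : (PresentedGroup.of i : BraidGroup n) * PresentedGroup.of j *
      (PresentedGroup.of i)⁻¹ * (PresentedGroup.of j)⁻¹ = 1 := key
  calc (PresentedGroup.of i : BraidGroup n) * PresentedGroup.of j
      = (PresentedGroup.of i * PresentedGroup.of j * (PresentedGroup.of i)⁻¹ *
          (PresentedGroup.of j)⁻¹) * (PresentedGroup.of j * PresentedGroup.of i) := by group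
    _ = PresentedGroup.of j * PresentedGroup.of i := by rw [key2]; group

lemma braid_braid_of {n : ℕ} (i j : Fin (n-1)) (h : (j:ℕ) = (i:ℕ)+1) :
    (PresentedGroup.of i : BraidGroup n) * PresentedGroup.of j * PresentedGroup.of i
      = PresentedGroup.of j * PresentedGroup.of i * PresentedGroup.of j := by
  have key := braidRel_eq_one (n := n) (Or.inr ⟨i, j, h, rfl⟩)
  simp only [map_mul, map_inv] at key
  have key2 : (PresentedGroup.of i : BraidGroup n) * PresentedGroup.of j * PresentedGroup.of i *
      (PresentedGroup.of j * PresentedGroup.of i * PresentedGroup.of j)⁻¹ = 1 := key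
  calc (PresentedGroup.of i : BraidGroup n) * PresentedGroup.of j * PresentedGroup.of i
      = (PresentedGroup.of i * PresentedGroup.of j * PresentedGroup.of i *
          (PresentedGroup.of j * PresentedGroup.of i * PresentedGroup.of j)⁻¹) *
          (PresentedGroup.of j * PresentedGroup.of i * PresentedGroup.of j) := by group
    _ = _ := by rw [key2]; group

lemma sigma41 : sigma 4 1 = PresentedGroup.of (⟨0, by norm_num⟩ : Fin (4-1)) := by
  norm_num [sigma]
lemma sigma42 : sigma 4 2 = PresentedGroup.of (⟨1, by norm_num⟩ : Fin (4-1)) := by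
  norm_num [sigma]
lemma sigma43 : sigma 4 3 = PresentedGroup.of (⟨2, by norm_num⟩ : Fin (4-1)) := by
  norm_num [sigma]
lemma sigma31 : sigma 3 1 = PresentedGroup.of (⟨0, by norm_num⟩ : Fin (3-1)) := by
  norm_num [sigma]
lemma sigma32 : sigma 3 2 = PresentedGroup.of (⟨1, by norm_num⟩ : Fin (3-1)) := by
  norm_num [sigma]

lemma hab4 : sigma 4 1 * sigma 4 2 * sigma 4 1 = sigma 4 2 * sigma 4 1 * sigma 4 2 := by
  rw [sigma41, sigma42]; exact braid_braid_of _ _ (by norm_num)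
lemma hbc4 : sigma 4 2 * sigma 4 3 * sigma 4 2 = sigma 4 3 * sigma 4 2 * sigma 4 3 := by
  rw [sigma42, sigma43]; exact braid_braid_of _ _ (by norm_num)
lemma hac4 : sigma 4 1 * sigma 4 3 = sigma 4 3 * sigma 4 1 := by
  rw [sigma41, sigma43]; exact braid_comm_of _ _ (by norm_num)

lemma band423 : band 4 2 3 = sigma 4 2 := by simp [band, bandConj]
lemma band434 : band 4 3 4 = sigma 4 3 := by simp [band, bandConj]
lemma band413 : band 4 1 3 = sigma 4 2 * sigma 4 1 * (sigma 4 2)⁻¹ := by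
  simp [band, bandConj, List.range_succ, mul_assoc]
lemma band424 : band 4 2 4 = sigma 4 3 * sigma 4 2 * (sigma 4 3)⁻¹ := by
  simp [band, bandConj, List.range_succ, mul_assoc]
lemma band312 : band 3 1 2 = sigma 3 1 := by simp [band, bandConj]
lemma band323 : band 3 2 3 = sigma 3 2 := by simp [band, bandConj]
lemma band313 : band 3 1 3 = sigma 3 2 * sigma 3 1 * (sigma 3 2)⁻¹ := by
  simp [band, bandConj, List.range_succ, mul_assoc]

lemma braidHom_of {m n d : ℕ} (h : m - 1 + d ≤ n - 1) (k : Fin (m-1)) :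
    braidHom m n d h (PresentedGroup.of k)
      = PresentedGroup.of (⟨(k:ℕ)+d, by omega⟩ : Fin (n-1)) := by
  unfold braidHom
  exact PresentedGroup.toGroup.of _

lemma sh31 (h : 3 - 1 + 1 ≤ 4 - 1) : braidHom 3 4 1 h (sigma 3 1) = sigma 4 2 := by
  rw [sigma31, braidHom_of, sigma42]
lemma sh32 (h : 3 - 1 + 1 ≤ 4 - 1) : braidHom 3 4 1 h (sigma 3 2) = sigma 4 3 := by
  rw [sigma32, braidHom_of, sigma43]

/-- In `B₄`, for `v, w, y ≥ 0` and `x, z ≥ 1`: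
`σ_{2,3}^v σ_{3,4}^{y+1} σ_{2,3}^w σ_{1,3}^x σ_{3,4}⁻¹ σ_{2,3}^{z-1} σ_{1,3}⁻¹ σ_{2,3}
  = σ_{2,3}^v σ_{3,4}^y σ_{2,4}^w σ_{2,3}^{z-1} σ_{1,3}⁻¹ σ_{3,4}^x σ_{2,3}`;
moreover this braid is conjugate in `B₄` to `sh(γ) σ_{1,3}⁻¹`, where
`γ = σ₂^x σ₁^{v+1} σ₂^y σ_{1,3}^w σ₁^{z-1} ∈ B₃` is strongly quasipositive and
`sh : B₃ → B₄` is the shift `σ_k ↦ σ_{k+1}`. -/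
theorem flyped_form_destabilizes (v w y x z : ℕ) (hx : 1 ≤ x) (hz : 1 ≤ z) :
    (band 4 2 3 ^ v * band 4 3 4 ^ (y + 1) * band 4 2 3 ^ w * band 4 1 3 ^ x *
        (band 4 3 4)⁻¹ * band 4 2 3 ^ (z - 1) * (band 4 1 3)⁻¹ * band 4 2 3 =
      band 4 2 3 ^ v * band 4 3 4 ^ y * band 4 2 4 ^ w * band 4 2 3 ^ (z - 1) *
        (band 4 1 3)⁻¹ * band 4 3 4 ^ x * band 4 2 3) ∧
    StronglyQuasipositive 3
      (sigma 3 2 ^ x * sigma 3 1 ^ (v + 1) * sigma 3 2 ^ y * band 3 1 3 ^ w *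
        sigma 3 1 ^ (z - 1)) ∧
    ∃ α : BraidGroup 4,
      α * (band 4 2 3 ^ v * band 4 3 4 ^ (y + 1) * band 4 2 3 ^ w * band 4 1 3 ^ x *
          (band 4 3 4)⁻¹ * band 4 2 3 ^ (z - 1) * (band 4 1 3)⁻¹ * band 4 2 3) * α⁻¹ =
        braidHom 3 4 1 (by omega)
          (sigma 3 2 ^ x * sigma 3 1 ^ (v + 1) * sigma 3 2 ^ y * band 3 1 3 ^ w *
            sigma 3 1 ^ (z - 1)) * (band 4 1 3)⁻¹ := by
  refine ⟨?_, ?_, (sigma 4 3) ^ x * sigma 4 2, ?_⟩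
  · rw [band423, band434, band413, band424]
    exact braid_eq1 (sigma 4 1) (sigma 4 2) (sigma 4 3) hab4 hbc4 hac4 v w y (z-1) x
  · have h2 : sigma 3 2 ∈ bandGens 3 :=
      ⟨2, 3, by norm_num, by norm_num, by norm_num, band323.symm⟩
    have h1 : sigma 3 1 ∈ bandGens 3 :=
      ⟨1, 2, by norm_num, by norm_num, by norm_num, band312.symm⟩
    have h3 : band 3 1 3 ∈ bandGens 3 :=
      ⟨1, 3, by norm_num, by norm_num, by norm_num, rfl⟩
    exact Submonoid.mul_mem _ (Submonoid.mul_mem _ (Submonoid.mul_mem _ (Submonoid.mul_mem _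
      (pow_mem (Submonoid.subset_closure h2) x) (pow_mem (Submonoid.subset_closure h1) (v+1)))
      (pow_mem (Submonoid.subset_closure h2) y)) (pow_mem (Submonoid.subset_closure h3) w))
      (pow_mem (Submonoid.subset_closure h1) (z-1))
  · rw [band423, band434, band413, band313]
    simp only [map_mul, map_pow, map_inv, sh31, sh32]
    exact braid_eq3 (sigma 4 1) (sigma 4 2) (sigma 4 3) hab4 hbc4 hac4 v w y (z-1) x
end
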